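/- Let MΣ = (P, Σ, V, MV) be a valid CQ materialized-view setting and Q a query of arity k ≥ 0 over P. For every k-tuple t̄ of values from consts(MΣ): t̄ is a certain answer to Q w.r.t. MΣ (t̄ ∈ certain_{MΣ}(Q)) if and only if the maximal MV-induced rewriting R*_t̄ for t̄ satisfies R*_t̄ ⊑_{Σ,MV,V} Q. -/

import Mathlib

namespace CertainViews

/-! ### Values, terms, schemas, instances -/

/-- Values: constants and labeled nulls. -/
inductive Val : Type
  | const : ℕ → Val
  | null : ℕ → Val
deriving DecidableEq

/-- A value is a constant. -/
def Val.IsConst (a : Val) : Prop := ∃ c, a = Val.const c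

/-- Terms of queries and dependencies: query variables and constants. -/
inductive Term : Type
  | var : ℕ → Term
  | const : ℕ → Term
deriving DecidableEq

/-- Evaluation of a term under an assignment of values to variables
(constants are fixed, as in homomorphisms/valuations). -/
def Term.eval (ν : ℕ → Val) : Term → Val
  | .var x => ν x
  | .const c => .const c

/-- A relational schema: a collection of relation symbols, each with a fixed arity. -/
structure Schema : Type 1 where
  rel : Type
  arity : rel → ℕ

variable {S : Schema}

/-- An instance of a schema assigns a relation (a set of tuples of values)
to each relation symbol. -/
structure Inst (S : Schema) : Type where
  rels : ∀ r : S.rel, Set (Fin (S.arity r) → Val)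

/-- The facts of an instance, as a set of (relation symbol, tuple) pairs. -/
def Inst.facts (I : Inst S) : Set ((r : S.rel) × (Fin (S.arity r) → Val)) :=
  { p | p.2 ∈ I.rels p.1 }

/-- The instance determined by a set of facts. -/
def Inst.ofFacts (F : Set ((r : S.rel) × (Fin (S.arity r) → Val))) : Inst S :=
  ⟨fun r => { t | (⟨r, t⟩ : (r : S.rel) × (Fin (S.arity r) → Val)) ∈ F }⟩

/-- A ground instance contains only constants. -/
def Inst.Ground (I : Inst S) : Prop :=
  ∀ r, ∀ t ∈ I.rels r, ∀ i, (t i).IsConst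

/-- The active domain of an instance. -/
def Inst.adom (I : Inst S) : Set Val :=
  { a | ∃ p ∈ I.facts, ∃ i, p.2 i = a }

/-- Applying a mapping on values to all facts of an instance. -/
def Inst.map (ρ : Val → Val) (I : Inst S) : Inst S :=
  Inst.ofFacts ((fun p : (r : S.rel) × (Fin (S.arity r) → Val) =>
    (⟨p.1, fun i => ρ (p.2 i)⟩ : (r : S.rel) × (Fin (S.arity r) → Val))) '' I.facts)

/-- A homomorphism between instances: a mapping of values fixing constants
that sends facts to facts. -/
def InstHom (J I : Inst S) : Prop :=
  ∃ ρ : Val → Val, (∀ c, ρ (Val.const c) = Val.const c) ∧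
    ∀ p ∈ J.facts, (⟨p.1, fun i => ρ (p.2 i)⟩ : (r : S.rel) × (Fin (S.arity r) → Val)) ∈ I.facts

/-! ### Atoms, conjunctive queries -/

/-- A relational atom over a schema. -/
structure Atom (S : Schema) : Type where
  rel : S.rel
  args : Fin (S.arity rel) → Term

/-- Applying a term mapping to an atom. -/
def Atom.mapTerms (f : Term → Term) (A : Atom S) : Atom S :=
  ⟨A.rel, fun i => f (A.args i)⟩

/-- The variables occurring in a list of atoms. -/
def BodyVars (B : List (Atom S)) : Set ℕ :=
  { x | ∃ A ∈ B, ∃ j, A.args j = Term.var x }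

/-- A conjunction of atoms holds in an instance under a valuation. -/
def BodyHolds (ν : ℕ → Val) (B : List (Atom S)) (I : Inst S) : Prop :=
  ∀ A ∈ B, (fun i => (A.args i).eval ν) ∈ I.rels A.rel

/-- The set of facts obtained by applying a valuation to a list of atoms. -/
def factSet (B : List (Atom S)) (ν : ℕ → Val) : Set ((r : S.rel) × (Fin (S.arity r) → Val)) :=
  { p | ∃ A ∈ B, p = ⟨A.rel, fun i => (A.args i).eval ν⟩ }

/-- A conjunctive query (`CQ` query) of arity `k`: a head vector of terms
and a body that is a finite conjunction of relational atoms. -/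
structure CQ (S : Schema) (k : ℕ) : Type where
  head : Fin k → Term
  body : List (Atom S)

/-- Safety of a CQ query: the body is nonempty and every head variable
occurs in the body. -/
def CQ.Safe {k : ℕ} (Q : CQ S k) : Prop :=
  Q.body ≠ [] ∧ ∀ x, (∃ i, Q.head i = Term.var x) → ∃ A ∈ Q.body, ∃ j, A.args j = Term.var x

/-- The answer to a CQ query on an instance: images of the head vector
under all valuations from the body to the instance. -/
def CQ.answer {k : ℕ} (Q : CQ S k) (I : Inst S) : Set (Fin k → Val) :=
  { t | ∃ ν : ℕ → Val, BodyHolds ν Q.body I ∧ t = fun i => (Q.head i).eval ν }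

/-- The constants occurring in a CQ query. -/
def CQ.consts {k : ℕ} (Q : CQ S k) : Set ℕ :=
  { c | (∃ i, Q.head i = Term.const c) ∨ ∃ A ∈ Q.body, ∃ j, A.args j = Term.const c }

/-- A query of arity `k` in an arbitrary query language, identified with its semantics. -/
def GenQuery (S : Schema) (k : ℕ) : Type := Inst S → Set (Fin k → Val)

/-- The tuple of constants corresponding to a tuple of natural numbers. -/
def constTuple {k : ℕ} (t : Fin k → ℕ) : Fin k → Val := fun i => Val.const (t i)


/-! ### Embedded dependencies: tgds and egds -/

/-- A tuple-generating dependency (tgd)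
`∀ x̄ ȳ (φ(x̄,ȳ) → ∃ z̄ ψ(x̄,z̄))`: the body is `φ`; the head is `ψ`; the
existential variables are the head variables not occurring in the body. -/
structure TGD (S : Schema) : Type where
  body : List (Atom S)
  head : List (Atom S)

/-- Satisfaction of a tgd in an instance. -/
def TGD.holds (σ : TGD S) (I : Inst S) : Prop :=
  ∀ ν : ℕ → Val, BodyHolds ν σ.body I →
    ∃ ν' : ℕ → Val, (∀ x ∈ BodyVars σ.body, ν' x = ν x) ∧ BodyHolds ν' σ.head I

/-- An equality-generating dependency (egd) `∀ x̄ (φ(x̄) → x₁ = x₂)`. -/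
structure EGD (S : Schema) : Type where
  body : List (Atom S)
  lhs : ℕ
  rhs : ℕ

/-- Satisfaction of an egd in an instance. -/
def EGD.holds (σ : EGD S) (I : Inst S) : Prop :=
  ∀ ν : ℕ → Val, BodyHolds ν σ.body I → ν σ.lhs = ν σ.rhs

/-- An embedded dependency: a tgd or an egd. -/
inductive Dep (S : Schema) : Type
  | tgd : TGD S → Dep S
  | egd : EGD S → Dep S

def Dep.holds : Dep S → Inst S → Prop
  | .tgd σ, I => σ.holds I
  | .egd σ, I => σ.holds I

/-- An instance satisfies a set of dependencies. -/
def Inst.satisfiesAll (I : Inst S) (D : Set (Dep S)) : Prop := ∀ d ∈ D, d.holds I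

/-- An atom contains no constants. -/
def Atom.ConstantFree (A : Atom S) : Prop := ∀ i, ∃ x, A.args i = Term.var x

/-- A dependency without constants. -/
def Dep.ConstantFree : Dep S → Prop
  | .tgd σ => (∀ A ∈ σ.body, A.ConstantFree) ∧ (∀ A ∈ σ.head, A.ConstantFree)
  | .egd σ => ∀ A ∈ σ.body, A.ConstantFree

/-! ### Weak acyclicity -/

/-- A position of a schema: a relation symbol together with an attribute index. -/
def Pos (S : Schema) : Type := S.rel × ℕ

/-- Variable `x` occurs in the list of atoms `B` at position `p`. -/
def OccursAt (B : List (Atom S)) (x : ℕ) (p : Pos S) : Prop :=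
  ∃ A ∈ B, A.rel = p.1 ∧ ∃ i : Fin (S.arity A.rel), (i : ℕ) = p.2 ∧ A.args i = Term.var x

/-- Regular edge of the dependency graph, induced by a tgd. -/
def TGD.RegularEdge (σ : TGD S) (p q : Pos S) : Prop :=
  ∃ x, OccursAt σ.body x p ∧ x ∈ BodyVars σ.head ∧ OccursAt σ.head x q

/-- Special edge of the dependency graph, induced by a tgd. -/
def TGD.SpecialEdge (σ : TGD S) (p q : Pos S) : Prop :=
  ∃ x y, OccursAt σ.body x p ∧ x ∈ BodyVars σ.head ∧
    y ∈ BodyVars σ.head ∧ y ∉ BodyVars σ.body ∧ OccursAt σ.head y q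

/-- An edge (regular or special) of the dependency graph of a set of dependencies. -/
def DepEdge (D : Set (Dep S)) (p q : Pos S) : Prop :=
  ∃ σ : TGD S, Dep.tgd σ ∈ D ∧ (σ.RegularEdge p q ∨ σ.SpecialEdge p q)

/-- A set of tgds and egds is weakly acyclic iff the dependency graph of its
tgds has no cycle going through a special edge. -/
def WeaklyAcyclic (D : Set (Dep S)) : Prop :=
  ¬ ∃ (σ : TGD S) (p q : Pos S), Dep.tgd σ ∈ D ∧ σ.SpecialEdge p q ∧
      Relation.ReflTransGen (DepEdge D) q p



/-! ### Views and materialized-view settings -/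

/-- A finite set of views over a schema `S`: view names with arities,
each defined by a (safe) CQ query over `S`. -/
structure Views (S : Schema) : Type 1 where
  idx : Type
  finite : Finite idx
  arity : idx → ℕ
  defn : ∀ v : idx, CQ S (arity v)
  safe : ∀ v, (defn v).Safe

/-- The view schema determined by a set of views. -/
def Views.schema {S : Schema} (V : Views S) : Schema := ⟨V.idx, V.arity⟩

/-- The image of an instance under a set of views: the instance of the view
schema assigning to each view the answer of its defining query. -/
def Views.image {S : Schema} (V : Views S) (I : Inst S) : Inst V.schema :=
  ⟨fun v => (V.defn v).answer I⟩

/-- The fixed part of a materialized-view setting: a schema `P`, a finite set `Σ`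
of embedded dependencies without constants on `P`, and a set `V` of CQ views on `P`. -/
structure Frame : Type 1 where
  S : Schema
  deps : Set (Dep S)
  depsFinite : deps.Finite
  depsConstantFree : ∀ d ∈ deps, d.ConstantFree
  views : Views S

/-- A (CQ) materialized-view setting `MΣ = (P, Σ, V, MV)`:
a frame together with a finite ground instance `MV` of the view schema. -/
structure MVSetting : Type 1 extends Frame where
  mv : Inst views.schema
  mvGround : mv.Ground
  mvFinite : mv.facts.Finite

/-- `V ⇒_{I,Σ} MV`: the ground instance `I` is a `Σ`-valid base instance
for `V` and `MV` (closed-world assumption). -/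
def MVSetting.ValidBase (M : MVSetting) (I : Inst M.S) : Prop :=
  I.Ground ∧ I.satisfiesAll M.deps ∧ ∀ v, (M.views.defn v).answer I = M.mv.rels v

/-- A materialized-view setting is valid iff some `Σ`-valid base instance exists. -/
def MVSetting.Valid (M : MVSetting) : Prop := ∃ I, M.ValidBase I

/-- The set of certain answers of a query w.r.t. a materialized-view setting. -/
def MVSetting.certain (M : MVSetting) {k : ℕ} (Q : GenQuery M.S k) : Set (Fin k → Val) :=
  { t | ∀ I, M.ValidBase I → t ∈ Q I }

/-- `consts(MΣ)`: the constants occurring in `MV` or in the view definitions. -/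
def MVSetting.consts (M : MVSetting) : Set ℕ :=
  { c | (∃ p ∈ M.mv.facts, ∃ i, p.2 i = Val.const c) ∨ ∃ v, c ∈ (M.views.defn v).consts }

/-- `MΣ`-conditional containment of queries: `Q₁(I) ⊆ Q₂(I)` for every
`Σ`-valid base instance `I` for `V` and `MV`. -/
def MVSetting.CondContained (M : MVSetting) {k : ℕ} (Q1 Q2 : GenQuery M.S k) : Prop :=
  ∀ I, M.ValidBase I → Q1 I ⊆ Q2 I

/-- The expansion query `Q₁(t̄) ← C^exp_MV`, where `C^exp_MV` is the expansion of
`MV` over the base schema: each fact of `MV` is replaced by the body of the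
corresponding view definition, with head variables bound to the constants of the
fact and with nonhead variables renamed apart across the facts.  Since the
variables are renamed apart, its answer on an instance `I` is `{t̄}` exactly
when every fact of `MV` is an answer to the corresponding view on `I`
(and is empty otherwise). -/
def MVSetting.expansionQuery (M : MVSetting) {k : ℕ} (t : Fin k → ℕ) : GenQuery M.S k :=
  fun I => { u | u = constTuple t ∧ ∀ v, M.mv.rels v ⊆ (M.views.defn v).answer I }


/-! ### Rewritings in terms of the views -/

/-- Substitution of terms for variables in a term. -/
def Term.subst (h : ℕ → Term) : Term → Term
  | .var x => h x
  | .const c => .const c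

/-- The term corresponding to a value (constants to constants, nulls to variables). -/
def Val.toTerm : Val → Term
  | .const c => .const c
  | .null n => .var n

/-- `R^exp` exists and is the query `E` over the base schema:
an expansion of a rewriting `R` over the view schema is a query `E` whose
answer on every base instance is the answer of `R` on the view image. -/
def IsExpansion {S : Schema} (V : Views S) {k : ℕ} (R : GenQuery V.schema k)
    (E : GenQuery S k) : Prop :=
  ∀ I, E I = R (V.image I)

/-- The expansion `R^exp` over the base schema of a CQ rewriting `R` over the views
of a setting, given by its semantics `R^exp(I) = R(I^{(+V)})`. -/
def MVSetting.expQuery (M : MVSetting) {k : ℕ} (R : CQ M.views.schema k) : GenQuery M.S k :=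
  fun I => R.answer (M.views.image I)

/-- `R ⊑_{Σ,MV,V} Q`: the rewriting `R` is `Σ`-conditionally contained in `Q`
w.r.t. `MV` and modulo `V`, i.e., `R^exp(I) ⊆ Q(I)` for every `Σ`-valid base
instance `I` for `V` and `MV`. -/
def MVSetting.RewContained (M : MVSetting) {k : ℕ} (R : CQ M.views.schema k)
    (Q : GenQuery M.S k) : Prop :=
  ∀ I, M.ValidBase I → M.expQuery R I ⊆ Q I

/-- A head-instantiated rewriting for a ground tuple `t̄`: a safe CQ query over the
view schema with head vector `t̄`, obtained from some safe CQ query with a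
constant-free head vector by instantiating its head variables to constants
(mapping all remaining terms to themselves). -/
def IsHeadInstantiated (M : MVSetting) {k : ℕ} (t : Fin k → ℕ)
    (R : CQ M.views.schema k) : Prop :=
  R.Safe ∧ (∀ i, R.head i = Term.const (t i)) ∧
  ∃ Rg : CQ M.views.schema k, Rg.Safe ∧ (∀ i, ∃ x, Rg.head i = Term.var x) ∧
    ∃ h : ℕ → Term,
      (∀ x, (∃ i, Rg.head i = Term.var x) → ∃ c, h x = Term.const c) ∧
      (∀ x, (¬ ∃ i, Rg.head i = Term.var x) → h x = Term.var x) ∧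
      R.head = (fun i => (Rg.head i).subst h) ∧
      R.body = Rg.body.map (Atom.mapTerms (Term.subst h))

/-- A rewriting `R` is `MV`-validated iff its answer on `MV` is nonempty. -/
def MVValidated (M : MVSetting) {k : ℕ} (R : CQ M.views.schema k) : Prop :=
  (R.answer M.mv).Nonempty

/-- The atom over the view schema corresponding to a fact of `MV`. -/
def MVSetting.factAtom (M : MVSetting) (v : M.views.idx)
    (tv : Fin (M.views.arity v) → Val) : Atom M.views.schema :=
  ⟨v, fun i => (tv i).toTerm⟩

/-- An `MV`-induced rewriting for `t̄`: a CQ rewriting with head vector `t̄`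
each of whose subgoals is a fact of `MV`. -/
def IsMVInduced (M : MVSetting) {k : ℕ} (t : Fin k → ℕ) (R : CQ M.views.schema k) : Prop :=
  (∀ i, R.head i = Term.const (t i)) ∧
  ∀ A ∈ R.body, ∃ v, ∃ tv ∈ M.mv.rels v, A = M.factAtom v tv

/-- A maximal `MV`-induced rewriting for `t̄`: an `MV`-induced rewriting for `t̄`
having every fact of `MV` as a subgoal. -/
def IsMaxMVInduced (M : MVSetting) {k : ℕ} (t : Fin k → ℕ) (R : CQ M.views.schema k) : Prop :=
  IsMVInduced M t R ∧ ∀ v, ∀ tv ∈ M.mv.rels v, M.factAtom v tv ∈ R.body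


/-! ### Data exchange: canonical solutions and instance chase -/

/-- The solutions of the data-exchange setting `S^{(de)}(MΣ) = (V, P, Σ_st ∪ Σ)`
associated with a setting `MΣ`, for the source instance `MV`: a target instance `J`
such that `(MV, J)` satisfies the source-to-target tgds
`V(x̄) → ∃ȳ body_V(x̄,ȳ)` (for each view `V`) and the target dependencies `Σ`. -/
def MVSetting.DESolution (M : MVSetting) (J : Inst M.S) : Prop :=
  J.satisfiesAll M.deps ∧ ∀ v, M.mv.rels v ⊆ (M.views.defn v).answer J

/-- A (standard) instance-chase step with a tgd: an applicable trigger whose head is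
added with fresh distinct nulls for the existential variables. -/
def tgdStep {S : Schema} (σ : TGD S) (J J' : Inst S) : Prop :=
  ∃ h : ℕ → Val, BodyHolds h σ.body J ∧
    ¬ (∃ g : ℕ → Val, (∀ x ∈ BodyVars σ.body, g x = h x) ∧ BodyHolds g σ.head J) ∧
    ∃ h' : ℕ → Val, (∀ x ∈ BodyVars σ.body, h' x = h x) ∧
      (∀ x ∈ BodyVars σ.head, x ∉ BodyVars σ.body →
        (∃ n, h' x = Val.null n) ∧ h' x ∉ J.adom) ∧
      Set.InjOn h' { x | x ∈ BodyVars σ.head ∧ x ∉ BodyVars σ.body } ∧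
      J' = Inst.ofFacts (J.facts ∪ factSet σ.head h')

/-- A successful instance-chase step with an egd: a violating trigger in which at
least one of the two values is a null, which is then replaced by the other value. -/
def egdStepOk {S : Schema} (σ : EGD S) (J J' : Inst S) : Prop :=
  ∃ h : ℕ → Val, BodyHolds h σ.body J ∧ h σ.lhs ≠ h σ.rhs ∧
    (((∃ n, h σ.lhs = Val.null n) ∧
        J' = J.map (fun a => if a = h σ.lhs then h σ.rhs else a)) ∨
     ((∃ n, h σ.rhs = Val.null n) ∧
        J' = J.map (fun a => if a = h σ.rhs then h σ.lhs else a)))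

/-- A failing instance-chase step with an egd: a violating trigger equating two
distinct constants. -/
def egdStepFail {S : Schema} (σ : EGD S) (J : Inst S) : Prop :=
  ∃ h : ℕ → Val, BodyHolds h σ.body J ∧ h σ.lhs ≠ h σ.rhs ∧
    (h σ.lhs).IsConst ∧ (h σ.rhs).IsConst

/-- A successful chase step with some dependency of a set. -/
def depStepTo {S : Schema} (D : Set (Dep S)) (J J' : Inst S) : Prop :=
  (∃ σ : TGD S, Dep.tgd σ ∈ D ∧ tgdStep σ J J') ∨
  (∃ σ : EGD S, Dep.egd σ ∈ D ∧ egdStepOk σ J J')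

/-- `J` is a (terminal) result of chasing `J0` with the dependencies `D`. -/
def ChaseResult {S : Schema} (D : Set (Dep S)) (J0 J : Inst S) : Prop :=
  Relation.ReflTransGen (depStepTo D) J0 J ∧ J.satisfiesAll D

/-- The result of chasing the source instance `MV` with the source-to-target tgds
`Σ_st` of the associated data-exchange setting: for each fact `t ∈ MV[V]`, the body
of the view definition of `V` is added, with the head variables bound to `t` and
with fresh, globally distinct nulls for the nonhead variables. -/
def MVSetting.IsPreSolution (M : MVSetting) (J : Inst M.S) : Prop :=
  ∃ ν : (v : M.views.idx) → (Fin (M.views.arity v) → Val) → ℕ → Val,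
    (∀ v, ∀ t ∈ M.mv.rels v, ∀ i, ((M.views.defn v).head i).eval (ν v t) = t i) ∧
    (∀ v, ∀ t ∈ M.mv.rels v, ∀ x ∈ BodyVars (M.views.defn v).body,
      (¬ ∃ i, (M.views.defn v).head i = Term.var x) → ∃ n, ν v t x = Val.null n) ∧
    (∀ v v' t t' x x', t ∈ M.mv.rels v → t' ∈ M.mv.rels v' →
      x ∈ BodyVars (M.views.defn v).body →
      (¬ ∃ i, (M.views.defn v).head i = Term.var x) →
      x' ∈ BodyVars (M.views.defn v').body →
      (¬ ∃ i, (M.views.defn v').head i = Term.var x') →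
      ν v t x = ν v' t' x' → v = v' ∧ HEq t t' ∧ x = x') ∧
    J.facts = ⋃ v, ⋃ t ∈ M.mv.rels v, factSet (M.views.defn v).body (ν v t)

/-- `J_de^{MΣ}`: a canonical universal solution for the source instance `MV` in the
data-exchange setting associated with `MΣ`, i.e., a terminal result of chasing `MV`
with `Σ_st ∪ Σ`. -/
def MVSetting.IsCanonicalSolution (M : MVSetting) (J : Inst M.S) : Prop :=
  ∃ J0, M.IsPreSolution J0 ∧ ChaseResult M.deps J0 J

/-! ### MV-enhanced chase (view-verified data exchange) -/

/-- Applying, to an instance, the conjunction of equalities forcing the values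
`vals j` to become the values `tgt j` (a disjunct of an `MV`-induced disjunctive
egd): succeeds iff there is a substitution fixing the constants and all other
values that realizes the equalities. -/
def substResult {S : Schema} (J J' : Inst S) {k : ℕ} (vals tgt : Fin k → Val) : Prop :=
  ∃ ρ : Val → Val, (∀ c, ρ (Val.const c) = Val.const c) ∧
    (∀ a, (∀ j, a ≠ vals j) → ρ a = a) ∧ (∀ j, ρ (vals j) = tgt j) ∧ J' = J.map ρ

/-- The values of the head vector of a CQ under a valuation. -/
def headVals {S : Schema} {k : ℕ} (Q : CQ S k) (h : ℕ → Val) : Fin k → Val :=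
  fun i => (Q.head i).eval h

/-- The set of results of one chase step with the `MV`-induced generalized egd of a
view `v` on an instance `J` (with trigger `h`): one (successful) result for each
tuple of `MV[v]`, or the empty instance `ε` (here: `none`) if all disjuncts fail. -/
def MVSetting.gedResults (M : MVSetting) (v : M.views.idx) (J : Inst M.S)
    (h : ℕ → Val) : Set (Option (Inst M.S)) :=
  { o | (∃ t ∈ M.mv.rels v, ∃ J', o = some J' ∧
           substResult J J' (headVals (M.views.defn v) h) t)
      ∨ (o = none ∧ ∀ t ∈ M.mv.rels v,
           ¬ ∃ J', substResult J J' (headVals (M.views.defn v) h) t) }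

/-- The step system of the `MV`-enhanced chase with `Σ ∪ Σ^{(MΣ)}` on instances:
to each node (an instance, or the empty instance `ε` = `none`) it assigns the
possible chase steps, each step being the set of its results.  The steps are:
chase steps with the tgds and egds of `Σ`; steps with the `MV`-induced implication
constraint `body_V → false` of each view `V` with `MV[V] = ∅`; and steps with the
`MV`-induced disjunctive egd `body_V(x̄,ȳ) → ⋁_i (x̄ = t̄ᵢ)` of each view `V` of
positive arity with `MV[V] ≠ ∅`. -/
def MVSetting.mvChaseSteps (M : MVSetting) :
    Option (Inst M.S) → Set (Set (Option (Inst M.S)))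
  | none => ∅
  | some J =>
    { C | (∃ σ : TGD M.S, Dep.tgd σ ∈ M.deps ∧ ∃ J', tgdStep σ J J' ∧ C = {some J'})
        ∨ (∃ σ : EGD M.S, Dep.egd σ ∈ M.deps ∧ ∃ J', egdStepOk σ J J' ∧ C = {some J'})
        ∨ (∃ σ : EGD M.S, Dep.egd σ ∈ M.deps ∧ egdStepFail σ J ∧
             C = {(none : Option (Inst M.S))})
        ∨ (∃ v, M.mv.rels v = ∅ ∧ (∃ h, BodyHolds h (M.views.defn v).body J) ∧
             C = {(none : Option (Inst M.S))})
        ∨ (∃ v, (M.mv.rels v).Nonempty ∧ 1 ≤ M.views.arity v ∧ ∃ h : ℕ → Val,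
             BodyHolds h (M.views.defn v).body J ∧
             (∀ t ∈ M.mv.rels v, ∃ i, headVals (M.views.defn v) h i ≠ t i) ∧
             C = M.gedResults v J h) }

/-- One edge of the MV-enhanced chase: passing from a node to one of the results of
an applicable chase step. -/
def MVSetting.mvStep (M : MVSetting) (a b : Option (Inst M.S)) : Prop :=
  ∃ C ∈ M.mvChaseSteps a, b ∈ C

/-- Reachability along MV-enhanced chase steps. -/
def MVSetting.mvReach (M : MVSetting) : Option (Inst M.S) → Option (Inst M.S) → Prop :=
  Relation.ReflTransGen M.mvStep

/-- A view-verified universal solution for `MΣ`: a nonempty leaf of a (finite)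
MV-enhanced chase of a canonical universal solution `J_de^{MΣ}` with
`Σ ∪ Σ^{(MΣ)}`, i.e., a terminal nonempty instance reachable from `J_de^{MΣ}`. -/
def MVSetting.IsVVSolution (M : MVSetting) (J : Inst M.S) : Prop :=
  ∃ Jde, M.IsCanonicalSolution Jde ∧ M.mvReach (some Jde) (some J) ∧
    M.mvChaseSteps (some J) = ∅

/-- A grounded version of an instance `J`: the result of consistently replacing all
its nulls with distinct new constants (avoiding the constants in `avoid`). -/
def GroundedVersion {S : Schema} (avoid : Set ℕ) (J J' : Inst S) : Prop :=
  ∃ ρ : Val → Val, (∀ c, ρ (Val.const c) = Val.const c) ∧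
    (∀ n, ∃ c, ρ (Val.null n) = Val.const c ∧ c ∉ avoid ∧ Val.const c ∉ J.adom) ∧
    Set.InjOn ρ J.adom ∧ J' = J.map ρ

/-- Chains of a given length for a binary relation. -/
def chainOfLength {α : Type*} (R : α → α → Prop) : ℕ → α → α → Prop
  | 0, a, b => a = b
  | n + 1, a, b => ∃ c, R a c ∧ chainOfLength R n c b


/-! ### Finitely-branching rooted trees, for chase trees -/

/-- Finite rooted trees with labels in `β`. -/
inductive RTree (β : Type) : Type
  | node : β → List (RTree β) → RTree β

namespace RTree

variable {β : Type}

/-- The label of the root. -/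
def label : RTree β → β
  | .node b _ => b

mutual
  /-- The depth of a tree (a single node has depth 1). -/
  def depth : RTree β → ℕ
    | .node _ ts => depthL ts + 1
  def depthL : List (RTree β) → ℕ
    | [] => 0
    | t :: ts => max (depth t) (depthL ts)
end

mutual
  /-- The number of leaves of a tree. -/
  def leafCount : RTree β → ℕ
    | .node _ [] => 1
    | .node _ (t :: ts) => leafCount t + leafCountL ts
  def leafCountL : List (RTree β) → ℕ
    | [] => 0
    | t :: ts => leafCount t + leafCountL ts
end

mutual
  /-- The list of labels of the leaves of a tree. -/
  def leaves : RTree β → List β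
    | .node b [] => [b]
    | .node _ (t :: ts) => leaves t ++ leavesL ts
  def leavesL : List (RTree β) → List β
    | [] => []
    | t :: ts => leaves t ++ leavesL ts
end

/-- The labels of a list of trees, as a set. -/
def labelsOf (ts : List (RTree β)) : Set β := { b | ∃ t ∈ ts, label t = b }

mutual
  /-- A chase tree for a disjunctive-step system `D` (assigning to each node label
  the set of possible chase steps, each step given by the set of its results):
  each inner node's children are exactly the results of one applicable chase step,
  and leaves are exactly the nodes to which no chase step applies. -/
  def Valid (D : β → Set (Set β)) : RTree β → Prop
    | .node b ts => (D b = ∅ ∧ ts = []) ∨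
        (∃ C ∈ D b, labelsOf ts = C ∧ ValidL D ts)
  def ValidL (D : β → Set (Set β)) : List (RTree β) → Prop
    | [] => True
    | t :: ts => Valid D t ∧ ValidL D ts
end

end RTree





/-! ### CQ queries with disequalities and unions thereof -/

/-- A `CQ^≠` query: a CQ query whose body may also contain disequality atoms. -/
structure CQNeq (S : Schema) (k : ℕ) : Type where
  head : Fin k → Term
  body : List (Atom S)
  diseqs : List (Term × Term)

/-- The answer to a `CQ^≠` query on an instance (via valuations: homomorphisms
from the relational atoms that satisfy all the disequalities). -/
def CQNeq.answer {k : ℕ} (Q : CQNeq S k) (I : Inst S) : Set (Fin k → Val) :=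
  { t | ∃ ν : ℕ → Val, BodyHolds ν Q.body I ∧
      (∀ p ∈ Q.diseqs, p.1.eval ν ≠ p.2.eval ν) ∧ t = fun i => (Q.head i).eval ν }

/-- The answer to a `UCQ^≠` query (a finite set of `CQ^≠` components; the
trivial query `[]` has empty answer on every instance). -/
def ucqAnswer {k : ℕ} (R : List (CQNeq S k)) (I : Inst S) : Set (Fin k → Val) :=
  { t | ∃ q ∈ R, t ∈ q.answer I }

/-- The terms occurring in a `CQ^≠` query. -/
def CQNeq.terms {k : ℕ} (Q : CQNeq S k) : Set Term :=
  { u | (∃ i, Q.head i = u) ∨ (∃ A ∈ Q.body, ∃ j, A.args j = u) ∨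
        (∃ p ∈ Q.diseqs, p.1 = u ∨ p.2 = u) }

/-- Applying a term mapping to a `CQ^≠` query. -/
def CQNeq.mapTerms {k : ℕ} (θ : Term → Term) (Q : CQNeq S k) : CQNeq S k :=
  ⟨fun i => θ (Q.head i), Q.body.map (Atom.mapTerms θ), Q.diseqs.map fun p => (θ p.1, θ p.2)⟩

/-- The query has the disequality atom `a ≠ b` (in either orientation). -/
def CQNeq.hasDiseq {k : ℕ} (Q : CQNeq S k) (a b : Term) : Prop :=
  (a, b) ∈ Q.diseqs ∨ (b, a) ∈ Q.diseqs

/-- A homomorphism (on the query level) from a conjunction of atoms into the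
body of a `CQ^≠` query. -/
def homTo {k : ℕ} (h : ℕ → Term) (B : List (Atom S)) (Q : CQNeq S k) : Prop :=
  ∀ A ∈ B, A.mapTerms (Term.subst h) ∈ Q.body

/-- The size of an atom. -/
def Atom.size (A : Atom S) : ℕ := 1 + S.arity A.rel

/-- The size of a CQ query. -/
def CQSize {k : ℕ} (_head : Fin k → Term) (body : List (Atom S)) : ℕ :=
  k + (body.map Atom.size).sum

def CQ.size {k : ℕ} (Q : CQ S k) : ℕ := CQSize Q.head Q.body
def CQNeq.size {k : ℕ} (Q : CQNeq S k) : ℕ := CQSize Q.head Q.body + Q.diseqs.length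

/-! ### Normalization of conjunctions of atoms -/

/-- The original (renamed-apart) copy of a term: variable `x` becomes `2x`,
so that the fresh variables introduced by normalization (odd numbers) are new. -/
def Term.orig : Term → Term
  | .var x => .var (2 * x)
  | .const c => .const c

/-- The original (renamed) copy of an atom. -/
def Atom.orig (A : Atom S) : Atom S := A.mapTerms Term.orig

/-- The argument list of an atom. -/
def Atom.argsList (A : Atom S) : List Term := List.ofFn A.args

/-- The term in position `(j, i)` of a list of atoms, if any. -/
def atomArg? (B : List (Atom S)) (j i : ℕ) : Option Term :=
  match B[j]? with
  | none => none
  | some A => A.argsList[i]?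

/-- Whether the occurrence at position `(j, i)` is a duplicate occurrence,
i.e., the same variable or constant already occurs at an earlier position. -/
def isDup (B : List (Atom S)) (j i : ℕ) : Bool :=
  match atomArg? B j i with
  | none => false
  | some u =>
      (List.range B.length).any fun j' =>
        match B[j']? with
        | none => false
        | some A' =>
            (List.range A'.argsList.length).any fun i' =>
              (decide (j' < j) || (decide (j' = j) && decide (i' < i))) &&
              decide (A'.argsList[i']? = some u)

/-- The fresh variable replacing the duplicate occurrence at position `(j, i)`. -/
def freshVar (j i : ℕ) : Term := Term.var (2 * Nat.pair j i + 1)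

/-- The normalized copy of the atom at index `j` of `B`: each duplicate occurrence
of a variable or constant is replaced by a fresh distinct variable. -/
def normAtom (B : List (Atom S)) (j : ℕ) (A : Atom S) : Atom S :=
  ⟨A.rel, fun i => if isDup B j (i : ℕ) then freshVar j (i : ℕ) else (A.args i).orig⟩

/-- `ℛ(φ⁽ⁿ⁾)`: the relational part of the normalized version of a conjunction of
atoms. -/
def normBody (B : List (Atom S)) : List (Atom S) :=
  (B.zipIdx.map Prod.swap).map fun p => normAtom B p.1 p.2

/-- `ℰ(φ⁽ⁿ⁾)`: the equality atoms of the normalized version, equating each fresh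
variable with the term it replaced. -/
def normEqs (B : List (Atom S)) : List (Term × Term) :=
  ((B.zipIdx.map Prod.swap).map fun p =>
    (p.2.argsList.zipIdx.map Prod.swap).filterMap fun q =>
      if isDup B p.1 q.1 then some (freshVar p.1 q.1, q.2.orig) else none).flatten


/-! ### Generalized dependencies and the chase of `CQ^≠` queries with `Υ_{MΣ}` -/

/-- A disjunct of the consequent of a generalized dependency: an existentially
quantified conjunction of relational atoms, a conjunction of equalities, or a
single disequality.  (`false`, as in generalized implication constraints, is
represented by the absence of disjuncts.) -/
inductive GDisj (S : Schema) : Type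
  | exAtoms : List (Atom S) → GDisj S
  | eqs : List (Term × Term) → GDisj S
  | neq : Term → Term → GDisj S

/-- A generalized dependency: an antecedent (a conjunction of relational atoms)
and a finite disjunction of disjuncts. -/
structure GDep (S : Schema) : Type where
  ante : List (Atom S)
  disjs : List (GDisj S)

variable {S : Schema} {k : ℕ}

/-- Two terms are unequal for trivial reasons (distinct constants). -/
def diseqTaut (a b : Term) : Prop :=
  ∃ c d, a = Term.const c ∧ b = Term.const d ∧ c ≠ d

/-- A disjunct is already satisfied (is a tautology) in a `CQ^≠` query under a
trigger `h` (with `av` the variables of the antecedent). -/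
def disjSat (Q : CQNeq S k) (h : ℕ → Term) (av : Set ℕ) : GDisj S → Prop
  | .exAtoms ψ => ∃ h' : ℕ → Term, (∀ x ∈ av, h' x = h x) ∧
      ∀ A ∈ ψ, A.mapTerms (Term.subst h') ∈ Q.body
  | .eqs L => ∀ p ∈ L, p.1.subst h = p.2.subst h
  | .neq a b => diseqTaut (a.subst h) (b.subst h) ∨ Q.hasDiseq (a.subst h) (b.subst h)

/-- The result of a chase step on a `CQ^≠` query with an equality conjunct:
the query is rewritten by a substitution that realizes all the equalities,
fixes the constants, and is the identity outside the terms being equated.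
The step requires that none of the equated pairs be disequated in the query. -/
def eqsChild (Q : CQNeq S k) (h : ℕ → Term) (L : List (Term × Term)) (Q' : CQNeq S k) : Prop :=
  (∀ p ∈ L, ¬ Q.hasDiseq (p.1.subst h) (p.2.subst h)) ∧
  ∃ θ : Term → Term, (∀ c, θ (Term.const c) = Term.const c) ∧
    (∀ u, (∀ p ∈ L, u ≠ p.1.subst h ∧ u ≠ p.2.subst h) → θ u = u) ∧
    (∀ p ∈ L, θ (p.1.subst h) = θ (p.2.subst h)) ∧
    (∀ u, θ u = u ∨ ∃ p ∈ L, θ u = θ (p.1.subst h)) ∧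
    Q' = Q.mapTerms θ

/-- A chase step with an equality conjunct fails (e.g., it equates distinct
constants, or terms that are explicitly disequated in the query). -/
def eqsFails (Q : CQNeq S k) (h : ℕ → Term) (L : List (Term × Term)) : Prop :=
  ¬ ∃ Q', eqsChild Q h L Q'

/-- The result of a chase step with a disequality disjunct: the disequality is
added to the query. -/
def neqChild (Q : CQNeq S k) (h : ℕ → Term) (a b : Term) (Q' : CQNeq S k) : Prop :=
  a.subst h ≠ b.subst h ∧
  Q' = ⟨Q.head, Q.body, Q.diseqs ++ [(a.subst h, b.subst h)]⟩

/-- A chase step with a disequality disjunct fails: the two sides are the same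
variable or the same constant. -/
def neqFails (_Q : CQNeq S k) (h : ℕ → Term) (a b : Term) : Prop :=
  a.subst h = b.subst h

/-- The result of a chase step with an existential-atoms disjunct: the image of the
atoms is conjoined to the body, with fresh distinct variables for the
existential variables. -/
def exAtomsChild (Q : CQNeq S k) (h : ℕ → Term) (av : Set ℕ) (ψ : List (Atom S))
    (Q' : CQNeq S k) : Prop :=
  ∃ h' : ℕ → Term, (∀ x ∈ av, h' x = h x) ∧
    (∀ x ∈ BodyVars ψ, x ∉ av → ∃ y, h' x = Term.var y ∧ Term.var y ∉ Q.terms) ∧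
    Set.InjOn h' { x | x ∈ BodyVars ψ ∧ x ∉ av } ∧
    Q' = ⟨Q.head, Q.body ++ ψ.map (Atom.mapTerms (Term.subst h')), Q.diseqs⟩

/-- The (successful) results of applying one disjunct in a chase step. -/
def disjChild (Q : CQNeq S k) (h : ℕ → Term) (av : Set ℕ) :
    GDisj S → Set (Option (CQNeq S k))
  | .exAtoms ψ => { o | ∃ Q', o = some Q' ∧ exAtomsChild Q h av ψ Q' }
  | .eqs L => { o | ∃ Q', o = some Q' ∧ eqsChild Q h L Q' }
  | .neq a b => { o | ∃ Q', o = some Q' ∧ neqChild Q h a b Q' }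

/-- Whether applying a disjunct in a chase step fails. -/
def disjFails (Q : CQNeq S k) (h : ℕ → Term) : GDisj S → Prop
  | .exAtoms _ => False
  | .eqs L => eqsFails Q h L
  | .neq a b => neqFails Q h a b

/-- The set of results of one chase step with a generalized dependency `g` on a
`CQ^≠` query `Q` with trigger `h`: the successful results of the disjuncts, or
the trivial query `ε` (= `none`) if all disjuncts fail. -/
def gdepResults (g : GDep S) (Q : CQNeq S k) (h : ℕ → Term) : Set (Option (CQNeq S k)) :=
  { o | (∃ d ∈ g.disjs, o ∈ disjChild Q h (BodyVars g.ante) d)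
      ∨ (o = none ∧ ∀ d ∈ g.disjs, disjFails Q h d) }

/-- The possible chase steps with a generalized dependency on a `CQ^≠` query:
a trigger from the antecedent into the body such that no disjunct is already
satisfied, together with the resulting set of children. -/
def gdepSteps (g : GDep S) (Q : CQNeq S k) : Set (Set (Option (CQNeq S k))) :=
  { C | ∃ h : ℕ → Term, homTo h g.ante Q ∧
      (∀ d ∈ g.disjs, ¬ disjSat Q h (BodyVars g.ante) d) ∧ C = gdepResults g Q h }

/-- The `≠`-transformation `σ_(≠)` of a tgd `σ : φ → ∃z̄ ψ`:
`ℛ(φ⁽ⁿ⁾) → (∃z̄ ψ) ∨ ¬ℰ(φ⁽ⁿ⁾)`. -/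
def TGD.neqT (σ : TGD S) : GDep S :=
  ⟨normBody σ.body,
   GDisj.exAtoms (σ.head.map Atom.orig) :: (normEqs σ.body).map fun p => GDisj.neq p.1 p.2⟩

/-- The `≠`-transformation `σ_(≠)` of an egd `σ : φ → x₁ = x₂`:
`ℛ(φ⁽ⁿ⁾) → (x₁ = x₂) ∨ ¬ℰ(φ⁽ⁿ⁾)`. -/
def EGD.neqT (σ : EGD S) : GDep S :=
  ⟨normBody σ.body,
   GDisj.eqs [((Term.var σ.lhs).orig, (Term.var σ.rhs).orig)] ::
     (normEqs σ.body).map fun p => GDisj.neq p.1 p.2⟩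

/-- The `MV`-induced generalized implication constraint `ι_V` of a view `V` with
`MV[V] = ∅`:  `ℛ(φ⁽ⁿ⁾) → false ∨ ¬ℰ(φ⁽ⁿ⁾)`. -/
def MVSetting.gicDep (M : MVSetting) (v : M.views.idx) : GDep M.S :=
  ⟨normBody (M.views.defn v).body,
   (normEqs (M.views.defn v).body).map fun p => GDisj.neq p.1 p.2⟩

/-- The equalities `x̄ = t̄` between the (normalized) head vector of a view and a
tuple of `MV`. -/
def MVSetting.gnegdPairs (M : MVSetting) (v : M.views.idx)
    (t : Fin (M.views.arity v) → Val) : List (Term × Term) :=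
  List.ofFn fun i => (((M.views.defn v).head i).orig, (t i).toTerm)

/-- The possible chase steps with the `MV`-induced generalized negd `τ_V` of a view
`V` of positive arity with `MV[V] ≠ ∅`:
`ℛ(φ⁽ⁿ⁾) → ⋁_{i} (x̄ = t̄ᵢ) ∨ ¬ℰ(φ⁽ⁿ⁾)`, one equality disjunct per tuple of
`MV[V]`. -/
def MVSetting.gnegdSteps (M : MVSetting) {k : ℕ} (v : M.views.idx) (Q : CQNeq M.S k) :
    Set (Set (Option (CQNeq M.S k))) :=
  { C | (M.mv.rels v).Nonempty ∧ 1 ≤ M.views.arity v ∧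
      ∃ h : ℕ → Term, homTo h (normBody (M.views.defn v).body) Q ∧
        (∀ t ∈ M.mv.rels v,
          ¬ disjSat Q h (BodyVars (normBody (M.views.defn v).body)) (GDisj.eqs (M.gnegdPairs v t))) ∧
        (∀ p ∈ normEqs (M.views.defn v).body,
          ¬ disjSat Q h (BodyVars (normBody (M.views.defn v).body)) (GDisj.neq p.1 p.2)) ∧
        C = { o | (∃ t ∈ M.mv.rels v,
                    o ∈ disjChild Q h (BodyVars (normBody (M.views.defn v).body))
                        (GDisj.eqs (M.gnegdPairs v t)))
               ∨ (∃ p ∈ normEqs (M.views.defn v).body,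
                    o ∈ disjChild Q h (BodyVars (normBody (M.views.defn v).body))
                        (GDisj.neq p.1 p.2))
               ∨ (o = none ∧
                    (∀ t ∈ M.mv.rels v, disjFails Q h (GDisj.eqs (M.gnegdPairs v t))) ∧
                    (∀ p ∈ normEqs (M.views.defn v).body, disjFails Q h (GDisj.neq p.1 p.2))) } }

/-- The step system of the chase of `CQ^≠` queries with the dependencies
`Υ_{MΣ} = Φ_(MV) ∪ Σ_(≠)`: steps with the `≠`-transformations of the tgds and
egds of `Σ`, with the `MV`-induced generalized implication constraints, and with
the `MV`-induced generalized negds.  (`none` is the node `ε`.) -/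
def MVSetting.qSteps (M : MVSetting) (k : ℕ) :
    Option (CQNeq M.S k) → Set (Set (Option (CQNeq M.S k)))
  | none => ∅
  | some Q =>
    { C | (∃ σ : TGD M.S, Dep.tgd σ ∈ M.deps ∧ C ∈ gdepSteps σ.neqT Q)
        ∨ (∃ σ : EGD M.S, Dep.egd σ ∈ M.deps ∧ C ∈ gdepSteps σ.neqT Q)
        ∨ (∃ v, M.mv.rels v = ∅ ∧ C ∈ gdepSteps (M.gicDep v) Q)
        ∨ (∃ v, C ∈ M.gnegdSteps v Q) }

/-- One edge of the chase of `CQ^≠` queries with `Υ_{MΣ}`. -/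
def MVSetting.qStep (M : MVSetting) (k : ℕ) (a b : Option (CQNeq M.S k)) : Prop :=
  ∃ C ∈ M.qSteps k a, b ∈ C

/-- The `MΣ`-expansion `Q'` of a CQ query `Q`: the `CQ^≠` query (without
disequalities) obtained by conjoining the body of `Q` with `C^exp_MV`, the
expansion of `MV` over the base schema, in which all the variables of
`C^exp_MV` have been renamed apart from those of `Q` (the head variables of
each view definition being bound to the constants of the corresponding fact
of `MV`, and its nonhead variables being mapped to globally distinct fresh
variables). -/
def MVSetting.IsMSExpansion (M : MVSetting) {k : ℕ} (Q : CQ M.S k) (Q' : CQNeq M.S k) : Prop :=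
  Q'.head = Q.head ∧ Q'.diseqs = [] ∧
  ∃ ν : (v : M.views.idx) → (Fin (M.views.arity v) → Val) → ℕ → Term,
    (∀ v, ∀ t ∈ M.mv.rels v, ∀ i,
      ((M.views.defn v).head i).subst (ν v t) = (t i).toTerm) ∧
    (∀ v, ∀ t ∈ M.mv.rels v, ∀ x ∈ BodyVars (M.views.defn v).body,
      (¬ ∃ i, (M.views.defn v).head i = Term.var x) →
      ∃ y, ν v t x = Term.var y ∧
        (∀ i, Q.head i ≠ Term.var y) ∧ ¬ ∃ A ∈ Q.body, ∃ j, A.args j = Term.var y) ∧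
    (∀ v v' t t' x x', t ∈ M.mv.rels v → t' ∈ M.mv.rels v' →
      x ∈ BodyVars (M.views.defn v).body →
      (¬ ∃ i, (M.views.defn v).head i = Term.var x) →
      x' ∈ BodyVars (M.views.defn v').body →
      (¬ ∃ i, (M.views.defn v').head i = Term.var x') →
      ν v t x = ν v' t' x' → v = v' ∧ HEq t t' ∧ x = x') ∧
    { A | A ∈ Q'.body } =
      { A | A ∈ Q.body } ∪
      { A | ∃ v, ∃ t ∈ M.mv.rels v, ∃ A0 ∈ (M.views.defn v).body,
              A = A0.mapTerms (Term.subst (ν v t)) }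

/-- `R` is a chase result `(Q)^{MΣ}` of the `CQ^≠` query `Q0` with `Υ_{MΣ}`:
the `UCQ^≠` query whose components are the non-`ε` leaves of a (finite) chase
tree for `MΣ` and `Q0`. -/
def MVSetting.IsChaseResult (M : MVSetting) {k : ℕ} (Q0 : CQNeq M.S k)
    (R : List (CQNeq M.S k)) : Prop :=
  ∃ T : RTree (Option (CQNeq M.S k)), T.label = some Q0 ∧
    RTree.Valid (M.qSteps k) T ∧ R = T.leaves.filterMap id


/-! ### Complexity: polynomial time, `Π^p_2`, and concrete problem encodings -/

/-- A polynomial-time computable function on natural numbers (under the standard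
binary encoding), via Mathlib's Turing-machine model. -/
def PTimeFun (f : ℕ → ℕ) : Prop :=
  Nonempty (Turing.TM2ComputableInPolyTime
    Computability.finEncodingNatBool.encode Computability.finEncodingNatBool.encode f)

/-- Pairing of three inputs into one. -/
def tripleCode (x y z : ℕ) : ℕ := Nat.pair x (Nat.pair y z)

/-- Membership in `Π^p_2` (the second level of the polynomial hierarchy) of a
language of (binary-encoded) natural numbers: a `∀∃` certificate characterization
with polynomial certificate bounds and a polynomial-time verifier. -/
def InPi2P (L : Set ℕ) : Prop :=
  ∃ (c : ℕ) (f : ℕ → ℕ), PTimeFun f ∧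
    ∀ x, x ∈ L ↔ ∀ y, Nat.size y ≤ (Nat.size x + 1) ^ c →
      ∃ z, Nat.size z ≤ (Nat.size x + 1) ^ c ∧ f (tripleCode x y z) = 1

/-- Polynomial-time many-one reducibility. -/
def PolyReduces (A B : Set ℕ) : Prop :=
  ∃ f : ℕ → ℕ, PTimeFun f ∧ ∀ x, x ∈ A ↔ f x ∈ B

/-- `Π^p_2`-hardness of a language. -/
def Pi2PHard (L : Set ℕ) : Prop := ∀ A, InPi2P A → PolyReduces A L

instance : Encodable Term :=
  Encodable.ofEquiv (ℕ ⊕ ℕ)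
    { toFun := fun t => match t with | .var x => .inl x | .const c => .inr c
      invFun := fun s => match s with | .inl x => .var x | .inr c => .const c
      left_inv := fun t => by cases t <;> rfl
      right_inv := fun s => by cases s <;> rfl }

/-- A concrete schema: relation symbols `0, …, m-1` with given arities. -/
structure CSchema : Type where
  m : ℕ
  ar : Fin m → ℕ

/-- The schema denoted by a concrete schema. -/
abbrev CSchema.toSchema (C : CSchema) : Schema := ⟨Fin C.m, C.ar⟩

/-- A concrete finite set of views over a concrete schema:
view names `0, …, l-1` with arities, defined by safe CQ queries. -/
structure CViews (C : CSchema) : Type where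
  l : ℕ
  var : Fin l → ℕ
  defn : ∀ v : Fin l, CQ C.toSchema (var v)
  safe : ∀ v, (defn v).Safe

/-- The set of views denoted by a concrete set of views. -/
def CViews.toViews {C : CSchema} (W : CViews C) : Views C.toSchema :=
  ⟨Fin W.l, inferInstance, W.var, W.defn, W.safe⟩

/-- The concrete syntax of an atom over a concrete schema. -/
def Atom.syn {C : CSchema} (A : Atom C.toSchema) : ℕ × List Term :=
  (A.rel.val, List.ofFn A.args)

/-- The concrete syntax of a CQ query over a concrete schema. -/
def CQ.syn {C : CSchema} {k : ℕ} (Q : CQ C.toSchema k) : List Term × List (ℕ × List Term) :=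
  (List.ofFn Q.head, Q.body.map Atom.syn)

/-- The ground instance of the view schema denoted by a concrete list of view facts
(each a view index together with a list of constants). -/
def mvDen {C : CSchema} (W : CViews C) (L : List (ℕ × List ℕ)) : Inst W.toViews.schema :=
  ⟨fun v => { t | ∃ e ∈ L, e.1 = v.val ∧ ∃ hl : e.2.length = W.var v,
      t = fun i => Val.const (e.2.get (Fin.cast hl.symm i)) }⟩

/-- The certain-query-answer problem, as a language: the fixed parts are a schema,
a set of dependencies, and the view definitions; the input is (an encoding of) a
CQ query `Q`, a ground tuple `t̄` of length equal to the arity of `Q`, and a set of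
view answers `MV`, and the yes-instances are those in which `t̄` is a certain
answer to `Q` w.r.t. the setting `(P, Σ, V, MV)`. -/
def certLang (C : CSchema) (W : CViews C) (ds : Set (Dep C.toSchema))
    (h1 : ds.Finite) (h2 : ∀ d ∈ ds, d.ConstantFree) : Set ℕ :=
  { n | ∃ (k : ℕ) (Q : CQ C.toSchema k) (t : Fin k → ℕ) (L : List (ℕ × List ℕ)),
      n = Encodable.encode (Q.syn, List.ofFn t, L) ∧ Q.Safe ∧
      ∃ (hg : (mvDen W L).Ground) (hf : (mvDen W L).facts.Finite),
        constTuple t ∈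
          (MVSetting.mk (Frame.mk C.toSchema ds h1 h2 W.toViews) (mvDen W L) hg hf).certain
            Q.answer }

/-- The `MΣ`-conditional-containment problem, as a language: the fixed parts are a
schema, a set of dependencies, and the view definitions; the input is (an encoding
of) two CQ queries `Q₁, Q₂` of the same arity and a set of view answers `MV`, and
the yes-instances are those in which `Q₁ ⊑_{MΣ} Q₂` for the setting
`(P, Σ, V, MV)`. -/
def contLang (C : CSchema) (W : CViews C) (ds : Set (Dep C.toSchema))
    (h1 : ds.Finite) (h2 : ∀ d ∈ ds, d.ConstantFree) : Set ℕ :=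
  { n | ∃ (k : ℕ) (Q1 Q2 : CQ C.toSchema k) (L : List (ℕ × List ℕ)),
      n = Encodable.encode (Q1.syn, Q2.syn, L) ∧ Q1.Safe ∧ Q2.Safe ∧
      ∃ (hg : (mvDen W L).Ground) (hf : (mvDen W L).facts.Finite),
        (MVSetting.mk (Frame.mk C.toSchema ds h1 h2 W.toViews) (mvDen W L) hg hf).CondContained
          Q1.answer Q2.answer }


/-!
On every `Σ`-valid base instance `I` the view image `V(I)` is exactly `MV`. An `MV`-induced
rewriting for `t̄` has the ground head `t̄` and only ground facts of `MV` as subgoals, so its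
answer on `MV` is `{t̄}`. Hence `R*_t̄^exp(I) = {t̄}`, and `R*_t̄^exp(I) ⊆ Q(I)` says exactly
`t̄ ∈ Q(I)`.
-/

theorem Val.eval_toTerm {a : Val} (ha : a.IsConst) (ν : ℕ → Val) : a.toTerm.eval ν = a := by
  obtain ⟨c, rfl⟩ := ha
  rfl

theorem MVSetting.eval_factAtom (M : MVSetting) {v : M.views.idx}
    {tv : Fin (M.views.arity v) → Val} (htv : tv ∈ M.mv.rels v) (ν : ℕ → Val) :
    (fun i => ((M.factAtom v tv).args i).eval ν) = tv :=
  funext fun i => Val.eval_toTerm (M.mvGround v tv htv i) ν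

theorem MVSetting.ValidBase.image_eq {M : MVSetting} {I : Inst M.S} (hI : M.ValidBase I) :
    M.views.image I = M.mv :=
  congrArg Inst.mk (funext hI.2.2)

theorem IsMVInduced.answer_mv {M : MVSetting} {k : ℕ} {t : Fin k → ℕ}
    {R : CQ M.views.schema k} (hR : IsMVInduced M t R) :
    R.answer M.mv = {constTuple t} := by
  obtain ⟨hhead, hbody⟩ := hR
  have head_eval : ∀ ν : ℕ → Val, (fun i => (R.head i).eval ν) = constTuple t := fun ν =>
    funext fun i => by rw [hhead i]; rfl
  ext u
  constructor
  · rintro ⟨ν, -, rfl⟩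
    exact head_eval ν
  · rintro rfl
    refine ⟨fun _ => Val.const 0, fun A hA => ?_, (head_eval _).symm⟩
    obtain ⟨v, tv, htv, rfl⟩ := hbody A hA
    rw [M.eval_factAtom htv]
    exact htv

theorem IsMVInduced.expQuery_eq {M : MVSetting} {k : ℕ} {t : Fin k → ℕ}
    {R : CQ M.views.schema k} (hR : IsMVInduced M t R) {I : Inst M.S} (hI : M.ValidBase I) :
    M.expQuery R I = {constTuple t} := by
  rw [MVSetting.expQuery, hI.image_eq, hR.answer_mv]

theorem MVSetting.rewContained_iff_mem_certain (M : MVSetting) {k : ℕ}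
    {R : CQ M.views.schema k} {Q : GenQuery M.S k} {u : Fin k → Val}
    (hR : ∀ I, M.ValidBase I → M.expQuery R I = {u}) :
    M.RewContained R Q ↔ u ∈ M.certain Q :=
  forall₂_congr fun I hI => by rw [hR I hI, Set.singleton_subset_iff]

theorem certain_iff_max_mv_induced (M : MVSetting) (hM : M.Valid)
    {k : ℕ} (Q : GenQuery M.S k) (t : Fin k → ℕ) (ht : ∀ i, t i ∈ M.consts) :
    ∀ Rm : CQ M.views.schema k, IsMaxMVInduced M t Rm →
      (constTuple t ∈ M.certain Q ↔ M.RewContained Rm Q) :=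
  fun _ hRm => (M.rewContained_iff_mem_certain fun _ hI => hRm.1.expQuery_eq hI).symm

end CertainViews
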